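/- Fix real parameters v ∈ ℝ and ε > 0. For λ = (λ₁, λ₂) ∈ ℝ² and k ∈ ℤ, define the operator T_{λ,k} on functions ψ: ℝ × ℝ × ℝ → ℂ by (T_{λ,k} ψ)(x, y, t) = exp(2πi(e^{−t}λ₁x + e^{t}λ₂y)) · ψ(x − e^{t}λ₂v, y + e^{−t}λ₁v, t − k·log ε). Write A_ε^k(η) = (ε^k η₁, ε^{−k} η₂). Then for all λ, η ∈ ℝ², all k, r ∈ ℤ, and every function ψ, T_{λ,k}(T_{η,r} ψ) = exp(2πi·v·(λ₁·ε^{−k}η₂ − λ₂·ε^{k}η₁)) · T_{λ + A_ε^k(η), k+r} ψ (equality of functions on ℝ³); that is, the operators T_{λ,k} satisfy the product rule of the twisted group algebra of Λ ⋊_ε ℤ with cocycle twist exp(2πi·v·(λ ∧ A_ε^k(η))). -/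
import Mathlib


/-- The operator `T_{λ,k} = π(R^{σ̃}_{(λ,k)})` on functions `ψ(x, y, t)`:
`(T_{λ,k}ψ)(x,y,t) = exp(2πi(e^{−t}λ₁x + e^{t}λ₂y))·
  ψ(x − e^{t}λ₂v, y + e^{−t}λ₁v, t − k·log ε)`. -/
noncomputable def TOp (v ε : ℝ) (lam : ℝ × ℝ) (k : ℤ) (ψ : ℝ → ℝ → ℝ → ℂ) :
    ℝ → ℝ → ℝ → ℂ :=
  fun x y t =>
    Complex.exp (2 * Real.pi * Complex.I *
        ((Real.exp (-t) * lam.1 * x + Real.exp t * lam.2 * y : ℝ) : ℂ)) *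
      ψ (x - Real.exp t * lam.2 * v) (y + Real.exp (-t) * lam.1 * v)
        (t - (k : ℝ) * Real.log ε)

lemma exp_int_log {ε : ℝ} (hε : 0 < ε) (m : ℤ) :
    Real.exp ((m : ℝ) * Real.log ε) = ε ^ m := by
  rw [mul_comm, ← Real.rpow_def_of_pos hε, Real.rpow_intCast]

/-- The operators `T_{λ,k}` satisfy the product rule of the twisted group algebra of
`Λ ⋊_ε ℤ`, with cocycle twist `exp(2πi·v·(λ ∧ A_ε^k(η)))` where
`A_ε^k(η) = (ε^k η₁, ε^{−k} η₂)`. -/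
theorem stmt8 (v ε : ℝ) (hε : 0 < ε) (lam eta : ℝ × ℝ) (k r : ℤ)
    (ψ : ℝ → ℝ → ℝ → ℂ) :
    TOp v ε lam k (TOp v ε eta r ψ) = fun x y t =>
      Complex.exp (2 * Real.pi * Complex.I *
          ((v * (lam.1 * (ε ^ (-k) * eta.2) - lam.2 * (ε ^ k * eta.1)) : ℝ) : ℂ)) *
        TOp v ε (lam.1 + ε ^ k * eta.1, lam.2 + ε ^ (-k) * eta.2) (k + r) ψ x y t := by
  funext x y t
  have hε' : ε ≠ 0 := ne_of_gt hε
  have h1 : Real.exp (-(t - (k : ℝ) * Real.log ε)) = Real.exp (-t) * ε ^ k := by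
    rw [neg_sub, sub_eq_add_neg, Real.exp_add, exp_int_log hε, mul_comm]
  have h2 : Real.exp (t - (k : ℝ) * Real.log ε) = Real.exp t * ε ^ (-k) := by
    rw [sub_eq_add_neg, Real.exp_add, ← neg_mul,
      show (-(k:ℝ)) = ((-k : ℤ) : ℝ) by push_cast; ring, exp_int_log hε]
  have hinv : ε ^ (-k) = (ε ^ k)⁻¹ := zpow_neg ε k
  have hk : ε ^ k ≠ 0 := zpow_ne_zero k hε'
  simp only [TOp, h1, h2]
  rw [← mul_assoc, ← Complex.exp_add, ← mul_assoc, ← Complex.exp_add,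
      ← mul_add, ← mul_add, ← Complex.ofReal_add, ← Complex.ofReal_add]
  have harg : t - (k : ℝ) * Real.log ε - (r : ℝ) * Real.log ε
      = t - ((k : ℝ) + (r : ℝ)) * Real.log ε := by ring
  rw [harg]
  congr 2
  · congr 1
    push_cast
    rw [zpow_neg, Complex.exp_neg]
    have hkC : ((ε : ℂ)) ^ k ≠ 0 := zpow_ne_zero k (by exact_mod_cast hε')
    field_simp [Complex.exp_ne_zero]
    ring
  · rw [hinv]; field_simp; ring
  · ring
  · push_cast; ring
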